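/- arXiv:math/9209220 — 3 statements merged into one kernel-verified Lean document; each statement's English description precedes it below -/
import Mathlib

section
/- Let f : X → X be a homeomorphism of a compact metric space and x ∈ X. Then the closure of the orbit of x is a minimal set if and only if for every ε > 0 there exists N such that for all n ≥ 0 there is some i with 0 ≤ i ≤ N and d(f^{n+i}(x), x) < ε. -/
/-!
If the orbit closure `K` of `x` is minimal, every point of `K` has an iterate in the ball
`B(x, ε)`; by compactness of `K` the exponents can be bounded by some `M`, and applying this to
`f^{n+M} x` gives a return to `B(x, ε)` at a time in `[n, n + 2M]`.

Conversely, syndetic returns make `x` recurrent along every tail of its forward orbit, so the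
whole `ℤ`-orbit closure of `x` lies in the forward orbit closure. If `y` is close to `f^m x`,
then by uniform continuity of `f^0, …, f^N` the point `f^i y` is close to `f^{m+i} x`, and
`i ≤ N` can be chosen with `f^{m+i} x` close to `x`. Hence `x` lies in the orbit closure of
every `y` in its own orbit closure, which is minimality.
-/

open Set Metric Function

def IsUniformlyRecurrent {X : Type*} [PseudoMetricSpace X] (f : X → X) (x : X) : Prop :=
  ∀ ε > 0, ∃ N : ℕ, ∀ n : ℕ, ∃ i ≤ N, dist (f^[n + i] x) x < ε

namespace IsUniformlyRecurrent

variable {X : Type*} [PseudoMetricSpace X] {f : X → X} {x y : X}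

lemma mem_closure_range_iterate_add (h : IsUniformlyRecurrent f x) (k : ℕ) :
    x ∈ closure (range fun n : ℕ => f^[n + k] x) := by
  refine Metric.mem_closure_iff.2 fun ε hε => ?_
  obtain ⟨N, hN⟩ := h ε hε
  obtain ⟨i, -, hi⟩ := hN k
  exact ⟨f^[i + k] x, ⟨i, rfl⟩, by rwa [dist_comm, add_comm]⟩

lemma mem_closure_range_iterate_of_mem [CompactSpace X] (hf : Continuous f)
    (h : IsUniformlyRecurrent f x) (hy : y ∈ closure (range fun n : ℕ => f^[n] x)) :
    x ∈ closure (range fun n : ℕ => f^[n] y) := by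
  refine Metric.mem_closure_iff.2 fun ε hε => ?_
  obtain ⟨N, hN⟩ := h (ε / 2) (half_pos hε)
  -- `f^0, …, f^N` are equicontinuous, being the coordinates of one uniformly continuous map.
  have hF : UniformContinuous fun z (i : Fin (N + 1)) => f^[i] z :=
    CompactSpace.uniformContinuous_of_continuous (continuous_pi fun i => hf.iterate i)
  obtain ⟨δ, hδ, hδF⟩ := Metric.uniformContinuous_iff.1 hF (ε / 2) (half_pos hε)
  obtain ⟨_, ⟨m, rfl⟩, hm⟩ := Metric.mem_closure_iff.1 hy δ hδ
  obtain ⟨i, hiN, hi⟩ := hN m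
  have hclose : dist (f^[i] y) (f^[m + i] x) < ε / 2 := by
    rw [add_comm, iterate_add_apply]
    exact (dist_pi_lt_iff (half_pos hε)).1 (hδF hm) ⟨i, Nat.lt_succ_of_le hiN⟩
  refine ⟨f^[i] y, ⟨i, rfl⟩, ?_⟩
  calc dist x (f^[i] y) ≤ dist (f^[i] y) (f^[m + i] x) + dist (f^[m + i] x) x := by
        rw [dist_comm]; exact dist_triangle _ _ _
    _ < ε / 2 + ε / 2 := add_lt_add hclose hi
    _ = ε := add_halves ε

end IsUniformlyRecurrent

namespace Homeomorph

variable {X : Type*} [TopologicalSpace X] (f : X ≃ₜ X)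

lemma toEquiv_zpow (n : ℤ) : (f ^ n).toEquiv = f.toEquiv ^ n :=
  map_zpow (MonoidHom.mk' toEquiv fun _ _ => rfl) f n

lemma coe_pow (n : ℕ) : ⇑(f ^ n) = (⇑f)^[n] :=
  hom_coe_pow _ rfl (fun _ _ => rfl) f n

lemma range_iterate_subset_range_zpow (x : X) :
    (range fun n : ℕ => (⇑f)^[n] x) ⊆ range fun n : ℤ => (f ^ n) x := by
  rintro _ ⟨n, rfl⟩
  exact ⟨n, by dsimp only; rw [zpow_natCast, coe_pow]⟩

lemma mapsTo_zpow_range_zpow (m : ℤ) (x : X) :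
    MapsTo (f ^ m) (range fun n : ℤ => (f ^ n) x) (range fun n : ℤ => (f ^ n) x) := by
  rintro _ ⟨n, rfl⟩
  exact ⟨m + n, by dsimp only; rw [zpow_add, mul_apply]⟩

lemma closure_range_zpow_subset {x y : X} (hy : y ∈ closure (range fun n : ℤ => (f ^ n) x)) :
    closure (range fun n : ℤ => (f ^ n) y) ⊆ closure (range fun n : ℤ => (f ^ n) x) :=
  closure_minimal (range_subset_iff.2 fun n =>
    (f.mapsTo_zpow_range_zpow n x).closure (f ^ n).continuous hy) isClosed_closure

lemma closure_range_zpow_subset_closure_range_iterate {x : X}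
    (hrec : ∀ k : ℕ, x ∈ closure (range fun n : ℕ => (⇑f)^[n + k] x)) :
    closure (range fun n : ℤ => (f ^ n) x) ⊆ closure (range fun n : ℕ => (⇑f)^[n] x) := by
  refine closure_minimal (range_subset_iff.2 fun m => ?_) isClosed_closure
  -- Since `m + |m| ≥ 0`, `f^m` sends the `|m|`-tail of the forward orbit into the forward orbit.
  have hmaps : MapsTo (f ^ m) (range fun n : ℕ => (⇑f)^[n + m.natAbs] x)
      (range fun n : ℕ => (⇑f)^[n] x) := by
    rintro _ ⟨n, rfl⟩
    refine ⟨n + (m + m.natAbs).toNat, ?_⟩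
    dsimp only
    rw [← coe_pow, ← coe_pow, ← zpow_natCast, ← zpow_natCast, ← mul_apply, ← zpow_add]
    congr 2
    omega
  exact hmaps.closure (f ^ m).continuous (hrec m.natAbs)

lemma exists_natAbs_le_zpow_mem {K U : Set X} (hK : IsCompact K) (hU : IsOpen U)
    (h : ∀ y ∈ K, ∃ k : ℤ, (f ^ k) y ∈ U) :
    ∃ M : ℕ, ∀ y ∈ K, ∃ k : ℤ, k.natAbs ≤ M ∧ (f ^ k) y ∈ U := by
  obtain ⟨t, ht⟩ := hK.elim_finite_subcover (fun k : ℤ => (f ^ k) ⁻¹' U)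
    (fun k => hU.preimage (f ^ k).continuous) fun y hy => mem_iUnion.2 (h y hy)
  refine ⟨t.sup Int.natAbs, fun y hy => ?_⟩
  obtain ⟨k, hk, hkU⟩ := mem_iUnion₂.1 (ht hy)
  exact ⟨k, Finset.le_sup hk, hkU⟩

end Homeomorph

lemma Homeomorph.isUniformlyRecurrent_of_minimal {X : Type*} [MetricSpace X] [CompactSpace X]
    (f : X ≃ₜ X) (x : X)
    (hmin : ∀ y ∈ closure (range fun n : ℤ => (f ^ n) x),
      closure (range fun n : ℤ => (f ^ n) y) = closure (range fun n : ℤ => (f ^ n) x)) :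
    IsUniformlyRecurrent f x := by
  intro ε hε
  have hret : ∀ y ∈ closure (range fun n : ℤ => (f ^ n) x), ∃ k : ℤ, (f ^ k) y ∈ ball x ε := by
    intro y hy
    have hx : x ∈ closure (range fun n : ℤ => (f ^ n) y) :=
      hmin y hy ▸ subset_closure ⟨0, by dsimp only; rw [zpow_zero, one_apply]⟩
    obtain ⟨_, ⟨k, rfl⟩, hk⟩ := Metric.mem_closure_iff.1 hx ε hε
    exact ⟨k, mem_ball'.2 hk⟩
  obtain ⟨M, hM⟩ := f.exists_natAbs_le_zpow_mem isClosed_closure.isCompact isOpen_ball hret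
  refine ⟨2 * M, fun n => ?_⟩
  obtain ⟨k, hkM, hk⟩ := hM ((f ^ ((n + M : ℕ) : ℤ)) x) (subset_closure ⟨_, rfl⟩)
  refine ⟨(k + M).toNat, by omega, ?_⟩
  have hiter : (⇑f)^[n + (k + M).toNat] x = (f ^ k) ((f ^ ((n + M : ℕ) : ℤ)) x) := by
    rw [← coe_pow, ← zpow_natCast, ← mul_apply, ← zpow_add]
    congr 2
    omega
  exact hiter ▸ hk

/-- Gottschalk's characterization: for a homeomorphism `f` of a compact metric space and a
point `x`, the orbit closure of `x` is a minimal set iff for every `ε > 0` there is `N` such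
that every stretch `n, n+1, …, n+N` of iterates contains an `i` with `d (f^{n+i} x, x) < ε`. -/
theorem stmt_12 {X : Type*} [MetricSpace X] [CompactSpace X] (f : X ≃ₜ X) (x : X) :
    (∀ y ∈ closure (Set.range fun n : ℤ => (f.toEquiv ^ n) x),
        closure (Set.range fun n : ℤ => (f.toEquiv ^ n) y) =
          closure (Set.range fun n : ℤ => (f.toEquiv ^ n) x)) ↔
      ∀ ε > 0, ∃ N : ℕ, ∀ n : ℕ, ∃ i ≤ N, dist ((⇑f)^[n + i] x) x < ε := by
  simp only [← Homeomorph.toEquiv_zpow, Homeomorph.coe_toEquiv]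
  refine ⟨f.isUniformlyRecurrent_of_minimal x, fun (h : IsUniformlyRecurrent f x) y hy => ?_⟩
  have hy' := f.closure_range_zpow_subset_closure_range_iterate h.mem_closure_range_iterate_add hy
  have hx : x ∈ closure (range fun n : ℤ => (f ^ n) y) :=
    closure_mono (f.range_iterate_subset_range_zpow y)
      (h.mem_closure_range_iterate_of_mem f.continuous hy')
  exact (f.closure_range_zpow_subset hy).antisymm (f.closure_range_zpow_subset hx)
end

section
/- Let α be irrational and U regular open with m(Fr(U)) = 0. Suppose ψ : Λ → S¹ is a continuous semiconjugacy from (Λ, σ) onto (S¹, R_α) that is injective on ψ^{-1}(B), where B ⊆ S¹ has full Haar measure and is ψ-saturated. Then (Λ, σ) is uniquely ergodic: any two σ-invariant Borel probability measures on Λ coincide. -/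
/-!
The pushforward `ψ_* μ` of a `T`-invariant probability measure is invariant under `R_α`. Since
`c ↦ ∫ f (c + x) d(ψ_* μ)` is continuous and the multiples of `α` are dense, it is then invariant
under every rotation, hence equal to Haar measure. So `μ (ψ⁻¹ B) = m B = 1`: `μ` lives on a set
where `ψ` is injective, and by Lusin–Souslin `μ s = m (ψ '' (s ∩ ψ⁻¹ B))` only depends on `s`.
-/

open MeasureTheory Set Function

namespace MeasureTheory

theorem map_vadd_eq_self_of_dense {M X : Type*} [TopologicalSpace M] [FirstCountableTopology M]
    [TopologicalSpace X] [HasOuterApproxClosed X] [MeasurableSpace X] [BorelSpace X]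
    [VAdd M X] [ContinuousVAdd M X] {μ : Measure X} [IsFiniteMeasure μ]
    (hd : Dense {c : M | μ.map (c +ᵥ ·) = μ}) (c : M) : μ.map (c +ᵥ ·) = μ := by
  refine ext_of_forall_integral_eq_of_IsFiniteMeasure fun f ↦ ?_
  have integral_map_vadd (c : M) : ∫ x, f x ∂μ.map (c +ᵥ ·) = ∫ x, f (c +ᵥ x) ∂μ :=
    integral_map (continuous_const_vadd c).aemeasurable f.continuous.aestronglyMeasurable
  have hcont : Continuous fun c : M ↦ ∫ x, f (c +ᵥ x) ∂μ :=
    continuous_of_dominated (bound := fun _ ↦ ‖f‖)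
      (fun c ↦ (f.continuous.comp (continuous_const_vadd c)).aestronglyMeasurable)
      (fun c ↦ .of_forall fun x ↦ f.norm_coe_le_norm _) (integrable_const _)
      (.of_forall fun x ↦ f.continuous.comp (continuous_id.vadd continuous_const))
  have hconst : (fun c : M ↦ ∫ x, f (c +ᵥ x) ∂μ) = fun _ ↦ ∫ x, f x ∂μ :=
    hcont.ext_on hd continuous_const fun c (hc : μ.map (c +ᵥ ·) = μ) ↦
      (integral_map_vadd c).symm.trans (congrArg (∫ x, f x ∂·) hc)
  rw [integral_map_vadd, congrFun hconst c]

theorem MeasurePreserving.zsmul_add_left {G : Type*} [AddGroup G] [MeasurableSpace G]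
    [MeasurableAdd G] {μ : Measure G} {g : G} (h : MeasurePreserving (g + ·) μ μ) (n : ℤ) :
    MeasurePreserving (n • g + ·) μ μ := by
  have hneg : MeasurePreserving (-g + ·) μ μ := h.symm (MeasurableEquiv.addLeft g)
  induction n using Int.induction_on with
  | zero =>
    simp only [zero_zsmul, zero_add]
    exact MeasurePreserving.id μ
  | succ n ih =>
    convert ih.comp h using 1
    ext x
    rw [comp_apply, add_zsmul, one_zsmul, add_assoc]
  | pred n ih =>
    convert ih.comp hneg using 1
    ext x
    rw [comp_apply, sub_zsmul, one_zsmul, add_assoc]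

theorem isAddLeftInvariant_of_denseRange_zsmul {G : Type*} [AddGroup G] [TopologicalSpace G]
    [ContinuousAdd G] [FirstCountableTopology G] [HasOuterApproxClosed G] [MeasurableSpace G]
    [BorelSpace G] {μ : Measure G} [IsFiniteMeasure μ] {g : G}
    (hg : DenseRange (· • g : ℤ → G)) (hμ : μ.map (g + ·) = μ) : μ.IsAddLeftInvariant := by
  have hmp : MeasurePreserving (g + ·) μ μ := ⟨(continuous_const_add g).measurable, hμ⟩
  refine ⟨map_vadd_eq_self_of_dense (hg.mono ?_)⟩
  rintro _ ⟨n, rfl⟩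
  exact (hmp.zsmul_add_left n).map_eq

theorem eq_of_isAddLeftInvariant_of_isProbabilityMeasure {G : Type*} [AddGroup G]
    [TopologicalSpace G] [IsTopologicalAddGroup G] [CompactSpace G] [MeasurableSpace G]
    [BorelSpace G] (μ ν : Measure G) [IsProbabilityMeasure μ] [IsProbabilityMeasure ν]
    [μ.IsAddLeftInvariant] [ν.IsAddHaarMeasure] : μ = ν := by
  have hμ := Measure.isAddInvariant_eq_smul_of_compactSpace μ ν
  have hc : μ.addHaarScalarFactor ν = 1 := by
    have huniv := congrArg (· univ) hμ
    simp only [Measure.smul_apply, measure_univ, ENNReal.smul_def, smul_eq_mul, mul_one] at huniv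
    exact_mod_cast huniv.symm
  rw [hμ, hc, one_smul]

theorem Measure.ext_of_map_eq_of_injOn {X Y : Type*} [TopologicalSpace X] [PolishSpace X]
    [MeasurableSpace X] [BorelSpace X] [TopologicalSpace Y] [T2Space Y] [MeasurableSpace Y]
    [BorelSpace Y] {ψ : X → Y} (hψ : Continuous ψ) {C : Set X} (hC : MeasurableSet C)
    (hinj : InjOn ψ C) {μ ν : Measure X} (hμC : μ Cᶜ = 0) (hνC : ν Cᶜ = 0)
    (h : μ.map ψ = ν.map ψ) : μ = ν := by
  have key (ρ : Measure X) (hρC : ρ Cᶜ = 0) {s : Set X} (hs : MeasurableSet s) :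
      ρ s = ρ.map ψ (ψ '' (s ∩ C)) := by
    have himage : MeasurableSet (ψ '' (s ∩ C)) :=
      (hs.inter hC).image_of_continuousOn_injOn hψ.continuousOn (hinj.mono inter_subset_right)
    calc ρ s = ρ (s ∩ C) := (measure_inter_conull hρC).symm
      _ = ρ (ψ ⁻¹' (ψ '' (s ∩ C)) ∩ C) := by rw [hinj.preimage_image_inter inter_subset_right]
      _ = ρ.map ψ (ψ '' (s ∩ C)) := by
        rw [measure_inter_conull hρC, Measure.map_apply hψ.measurable himage]
  ext s hs
  rw [key μ hμC hs, key ν hνC hs, h]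

end MeasureTheory

theorem UnitAddCircle.eq_volume_of_map_add_left_eq_self {α : ℝ} (hα : Irrational α)
    (μ : Measure UnitAddCircle) [IsProbabilityMeasure μ]
    (h : μ.map ((α : UnitAddCircle) + ·) = μ) : μ = volume := by
  have hd : DenseRange (· • (α : UnitAddCircle) : ℤ → UnitAddCircle) :=
    AddCircle.denseRange_zsmul_coe_iff.mpr (by simpa using hα)
  have : IsProbabilityMeasure (volume : Measure UnitAddCircle) :=
    ⟨by simp [AddCircle.measure_univ]⟩
  have := isAddLeftInvariant_of_denseRange_zsmul hd h
  exact eq_of_isAddLeftInvariant_of_isProbabilityMeasure μ volume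

theorem stmt_15_general {Λ : Type*} [TopologicalSpace Λ] [CompactSpace Λ] [TopologicalSpace.MetrizableSpace Λ]
    [MeasurableSpace Λ] [BorelSpace Λ] (T : Λ ≃ₜ Λ)
    (α : ℝ) (hα : Irrational α)
    (ψ : Λ → UnitAddCircle) (hψc : Continuous ψ)
    (hsemi : ∀ y, ψ (T y) = ψ y + (α : UnitAddCircle))
    (B : Set UnitAddCircle) (hBmeas : MeasurableSet B) (hBfull : volume B = 1)
    (hinj : Set.InjOn ψ (ψ ⁻¹' B)) :
    ∀ μ ν : Measure Λ, IsProbabilityMeasure μ → IsProbabilityMeasure ν →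
      Measure.map T μ = μ → Measure.map T ν = ν → μ = ν := by
  have : PolishSpace Λ := by
    let := TopologicalSpace.metrizableSpaceMetric Λ
    infer_instance
  have hsc : Semiconj ψ T ((α : UnitAddCircle) + ·) := fun y ↦ (hsemi y).trans (add_comm _ _)
  have push_eq_volume (μ : Measure Λ) [IsProbabilityMeasure μ] (hμ : μ.map T = μ) :
      μ.map ψ = volume := by
    have hψμ : MeasurePreserving ψ μ (μ.map ψ) := ⟨hψc.measurable, rfl⟩
    have hT : MeasurePreserving T μ μ := ⟨T.continuous.measurable, hμ⟩
    have : IsProbabilityMeasure (μ.map ψ) := Measure.isProbabilityMeasure_map hψc.aemeasurable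
    exact UnitAddCircle.eq_volume_of_map_add_left_eq_self hα _
      (hψμ.of_semiconj hT hsc (continuous_const_add _).measurable).map_eq
  have null_compl (μ : Measure Λ) [IsProbabilityMeasure μ] (hμ : μ.map T = μ) :
      μ (ψ ⁻¹' B)ᶜ = 0 := by
    rw [prob_compl_eq_zero_iff (hψc.measurable hBmeas), ← Measure.map_apply hψc.measurable hBmeas,
      push_eq_volume μ hμ, hBfull]
  intro μ ν _ _ hμ hν
  exact Measure.ext_of_map_eq_of_injOn hψc (hψc.measurable hBmeas) hinj (null_compl μ hμ)
    (null_compl ν hν) ((push_eq_volume μ hμ).trans (push_eq_volume ν hν).symm)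

/-- If `(Λ, T)` is a compact system with a continuous semiconjugacy `ψ` onto the irrational
rotation `(S¹, R_α)` that is injective on `ψ⁻¹ B` for a full-measure set `B`, then `(Λ, T)` is
uniquely ergodic: any two `T`-invariant Borel probability measures coincide. -/
theorem stmt_15 {Λ : Type*} [TopologicalSpace Λ] [CompactSpace Λ] [TopologicalSpace.MetrizableSpace Λ]
    [MeasurableSpace Λ] [BorelSpace Λ] (T : Λ ≃ₜ Λ)
    (α : ℝ) (hα : Irrational α)
    (ψ : Λ → UnitAddCircle) (hψc : Continuous ψ) (hψs : Function.Surjective ψ)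
    (hsemi : ∀ y, ψ (T y) = ψ y + (α : UnitAddCircle))
    (B : Set UnitAddCircle) (hBmeas : MeasurableSet B) (hBfull : volume B = 1)
    (hinj : Set.InjOn ψ (ψ ⁻¹' B)) :
    ∀ μ ν : Measure Λ, IsProbabilityMeasure μ → IsProbabilityMeasure ν →
      Measure.map T μ = μ → Measure.map T ν = ν → μ = ν :=
  stmt_15_general T α hα ψ hψc hsemi B hBmeas hBfull hinj
end

section
/- For each sequence γ in the Hilbert cube H = {γ ∈ ℝ^ℕ : 0 ≤ γᵢ ≤ 1/(i+2) for all i}, define U_γ = ⋃_{i∈ℕ} (1/(i+2) − γᵢ³, 1/(i+2) + γᵢ³) ⊆ S¹. Then the map γ ↦ U_γ from H (product topology) to regular open sets with metric d(U,V) = m(U △ V) is continuous and injective. -/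
/-!
With `cᵢ = 1/(i+2)`, the real intervals `(cᵢ - γᵢ³, cᵢ + γᵢ³)` all lie in `(0, 1)`, where the
covering map `ℝ → S¹` is injective, and they are pairwise disjoint even at the maximal radius
`cᵢ³`, because `cᵢ³ + cᵢ₊₁³ < cᵢ - cᵢ₊₁`. So `U_γ` lifts to the union of these intervals and each
of them is recovered from `U_γ` by intersecting with the maximal `i`-th interval: this gives
injectivity. For continuity, `m(U_γ ∆ U_γ') ≤ ∑ᵢ 2|γᵢ³ - γ'ᵢ³|`, and this sum tends to `0` as
`γ → γ'` by dominated convergence, with the summable bound `2cᵢ³`.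
-/

open MeasureTheory

/-- The regular open set `U_γ = ⋃ i, (1/(i+2) − γᵢ³, 1/(i+2) + γᵢ³)` associated to a point
`γ` of the Hilbert cube `H = ∏ᵢ [0, 1/(i+2)]`. -/
noncomputable def Ugamma (γ : ℕ → ℝ) : Set UnitAddCircle :=
  ⋃ i : ℕ, (fun x : ℝ => (x : UnitAddCircle)) ''
    Set.Ioo (1 / ((i : ℝ) + 2) - (γ i) ^ 3) (1 / ((i : ℝ) + 2) + (γ i) ^ 3)

open Set Filter Topology
open scoped symmDiff

lemma pow_three_le_div_four {x : ℝ} (h₀ : 0 ≤ x) (h : x ≤ 1 / 2) : x ^ 3 ≤ x / 4 := by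
  nlinarith [mul_nonneg h₀ h₀, mul_nonneg (mul_nonneg h₀ h₀) (by linarith : 0 ≤ 1 / 2 - x)]

lemma one_div_add_pow_three_lt {n m : ℝ} (hn : 2 ≤ n) (hm : n + 1 ≤ m) :
    1 / m + (1 / m) ^ 3 < 1 / n - (1 / n) ^ 3 := by
  have hm' : 1 / m + (1 / m) ^ 3 ≤ 1 / (n + 1) + (1 / (n + 1)) ^ 3 := by
    have h := one_div_le_one_div_of_le (by linarith) hm
    linarith [pow_le_pow_left₀ (one_div_nonneg.mpr (by linarith)) h 3]
  have hn' : 1 / n - (1 / n) ^ 3 - (1 / (n + 1) + (1 / (n + 1)) ^ 3)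
      = ((n - 2) * (n ^ 3 + 2 * n ^ 2 + 2 * n + 1) + 1) / (n ^ 3 * (n + 1) ^ 3) := by
    field_simp
    ring
  have : 0 < 1 / n - (1 / n) ^ 3 - (1 / (n + 1) + (1 / (n + 1)) ^ 3) := by
    rw [hn']
    have : 0 < n := by linarith
    have : 0 ≤ n - 2 := by linarith
    positivity
  linarith

lemma Real.volume_Ioo_symmDiff_Ioo (c : ℝ) {a b : ℝ} (ha : 0 ≤ a) (hb : 0 ≤ b) :
    volume (Ioo (c - a) (c + a) ∆ Ioo (c - b) (c + b)) = ENNReal.ofReal (2 * |a - b|) := by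
  wlog hab : a ≤ b generalizing a b
  · rw [symmDiff_comm, this hb ha (le_of_not_ge hab), abs_sub_comm]
  rw [symmDiff_of_le (Ioo_subset_Ioo (by linarith) (by linarith)),
    measure_sdiff (Ioo_subset_Ioo (by linarith) (by linarith)) measurableSet_Ioo.nullMeasurableSet
      measure_Ioo_lt_top.ne, Real.volume_Ioo, Real.volume_Ioo, ← ENNReal.ofReal_sub _ (by linarith),
    abs_of_nonpos (by linarith)]
  congr 1
  ring

noncomputable def arcCenter (i : ℕ) : ℝ := 1 / ((i : ℝ) + 2)

def arc (i : ℕ) (r : ℝ) : Set ℝ := Ioo (arcCenter i - r) (arcCenter i + r)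

def hilbertCube : Set (ℕ → ℝ) := {γ | ∀ i, 0 ≤ γ i ∧ γ i ≤ arcCenter i}

lemma arcCenter_pos (i : ℕ) : 0 < arcCenter i := by
  unfold arcCenter; positivity

lemma arcCenter_le_half (i : ℕ) : arcCenter i ≤ 1 / 2 :=
  one_div_le_one_div_of_le two_pos (by linarith [(Nat.cast_nonneg i : (0 : ℝ) ≤ i)])

lemma arc_subset_Ioo {i : ℕ} {r : ℝ} (hr : r ≤ arcCenter i ^ 3) : arc i r ⊆ Ioo 0 1 := by
  have h := pow_three_le_div_four (arcCenter_pos i).le (arcCenter_le_half i)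
  exact Ioo_subset_Ioo (by linarith [arcCenter_pos i]) (by linarith [arcCenter_le_half i])

lemma arc_mono (i : ℕ) {r s : ℝ} (h : r ≤ s) : arc i r ⊆ arc i s :=
  Ioo_subset_Ioo (by linarith) (by linarith)

lemma disjoint_arc {i j : ℕ} (hij : i ≠ j) :
    Disjoint (arc i (arcCenter i ^ 3)) (arc j (arcCenter j ^ 3)) := by
  wlog h : j < i generalizing i j
  · exact (this hij.symm (hij.lt_or_gt.resolve_right h)).symm
  have hji : (j : ℝ) + 1 ≤ i := by exact_mod_cast h
  have hsep := one_div_add_pow_three_lt (n := (j : ℝ) + 2) (m := (i : ℝ) + 2)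
    (by linarith [(Nat.cast_nonneg j : (0 : ℝ) ≤ j)]) (by linarith)
  unfold arc arcCenter
  exact disjoint_left.mpr fun x hxi hxj => by linarith [hxi.2, hxj.1]

lemma iUnion_arc_inter_arc {r : ℕ → ℝ} (hr : ∀ j, r j ≤ arcCenter j ^ 3) (i : ℕ) :
    (⋃ j, arc j (r j)) ∩ arc i (arcCenter i ^ 3) = arc i (r i) := by
  refine Subset.antisymm ?_ fun x hx => ⟨mem_iUnion.mpr ⟨i, hx⟩, arc_mono i (hr i) hx⟩
  rintro x ⟨hx, hxi⟩
  obtain ⟨j, hxj⟩ := mem_iUnion.mp hx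
  obtain rfl : j = i := by
    by_contra hji
    exact (disjoint_arc hji).ne_of_mem (arc_mono j (hr j) hxj) hxi rfl
  exact hxj

lemma injOn_arc (i : ℕ) : InjOn (arc i) (Ici 0) := by
  intro r (hr : 0 ≤ r) s (hs : 0 ≤ s) h
  have := congrArg volume h
  simp only [arc, Real.volume_Ioo] at this
  rw [ENNReal.ofReal_eq_ofReal_iff (by linarith) (by linarith)] at this
  linarith

lemma Ugamma_eq (γ : ℕ → ℝ) : Ugamma γ = ⋃ i, ((↑) : ℝ → UnitAddCircle) '' arc i (γ i ^ 3) :=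
  rfl

lemma isOpen_Ugamma (γ : ℕ → ℝ) : IsOpen (Ugamma γ) :=
  isOpen_iUnion fun _ => QuotientAddGroup.isOpenMap_coe _ isOpen_Ioo

lemma coe_preimage_iUnion_image_arc_inter_Ioc {r : ℕ → ℝ} (hr : ∀ i, r i ≤ arcCenter i ^ 3) :
    ((↑) : ℝ → UnitAddCircle) ⁻¹' (⋃ i, (↑) '' arc i (r i)) ∩ Ioc 0 (0 + 1) = ⋃ i, arc i (r i) := by
  refine Subset.antisymm ?_ fun x hx => ?_
  · rintro x ⟨hx, hx01⟩
    obtain ⟨i, y, hy, hyx⟩ := mem_iUnion.mp hx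
    have hy01 : y ∈ Ioc 0 (0 + 1) := Ioo_subset_Ioc_self (by simpa using arc_subset_Ioo (hr i) hy)
    rw [AddCircle.coe_eq_coe_iff_of_mem_Ioc hy01 hx01] at hyx
    exact mem_iUnion.mpr ⟨i, hyx ▸ hy⟩
  · obtain ⟨i, hi⟩ := mem_iUnion.mp hx
    exact ⟨mem_iUnion.mpr ⟨i, x, hi, rfl⟩,
      Ioo_subset_Ioc_self (by simpa using arc_subset_Ioo (hr i) hi)⟩

lemma pow_three_le_of_mem_hilbertCube {γ : ℕ → ℝ} (hγ : γ ∈ hilbertCube) (i : ℕ) :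
    γ i ^ 3 ≤ arcCenter i ^ 3 :=
  pow_le_pow_left₀ (hγ i).1 (hγ i).2 3

lemma summable_arcCenter_pow_three : Summable fun i => arcCenter i ^ 3 := by
  refine ((summable_nat_add_iff 2).mpr
    (Real.summable_one_div_nat_pow.mpr (by norm_num : 1 < 3))).congr fun i => ?_
  simp [arcCenter]

lemma injOn_Ugamma : InjOn Ugamma hilbertCube := by
  intro γ hγ γ' hγ' h
  have hpre := congrArg (fun U => ((↑) : ℝ → UnitAddCircle) ⁻¹' U ∩ Ioc 0 (0 + 1)) h
  simp only [Ugamma_eq,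
    coe_preimage_iUnion_image_arc_inter_Ioc (pow_three_le_of_mem_hilbertCube hγ),
    coe_preimage_iUnion_image_arc_inter_Ioc (pow_three_le_of_mem_hilbertCube hγ')] at hpre
  funext i
  have harc := congrArg (· ∩ arc i (arcCenter i ^ 3)) hpre
  simp only [iUnion_arc_inter_arc (pow_three_le_of_mem_hilbertCube hγ),
    iUnion_arc_inter_arc (pow_three_le_of_mem_hilbertCube hγ')] at harc
  exact (pow_left_inj₀ (hγ i).1 (hγ' i).1 three_ne_zero).mp
    (injOn_arc i (pow_nonneg (hγ i).1 3) (pow_nonneg (hγ' i).1 3) harc)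

lemma volume_Ugamma_symmDiff_le {γ γ' : ℕ → ℝ} (hγ : γ ∈ hilbertCube) (hγ' : γ' ∈ hilbertCube) :
    volume (Ugamma γ ∆ Ugamma γ') ≤ ∑' i, ENNReal.ofReal (2 * |γ i ^ 3 - γ' i ^ 3|) := by
  rw [AddCircle.add_projection_respects_measure 1 0
      ((isOpen_Ugamma γ).measurableSet.symmDiff (isOpen_Ugamma γ').measurableSet),
    preimage_symmDiff, inter_symmDiff_distrib_right, Ugamma_eq, Ugamma_eq,
    coe_preimage_iUnion_image_arc_inter_Ioc (pow_three_le_of_mem_hilbertCube hγ),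
    coe_preimage_iUnion_image_arc_inter_Ioc (pow_three_le_of_mem_hilbertCube hγ')]
  calc volume ((⋃ i, arc i (γ i ^ 3)) ∆ ⋃ i, arc i (γ' i ^ 3))
      ≤ ∑' i, volume (arc i (γ i ^ 3) ∆ arc i (γ' i ^ 3)) :=
        (measure_mono iUnion_symmDiff_iUnion_subset).trans (measure_iUnion_le _)
    _ = ∑' i, ENNReal.ofReal (2 * |γ i ^ 3 - γ' i ^ 3|) := by
        refine tsum_congr fun i => ?_
        exact Real.volume_Ioo_symmDiff_Ioo _ (pow_nonneg (hγ i).1 3) (pow_nonneg (hγ' i).1 3)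

lemma tendsto_volume_Ugamma_symmDiff {γ₀ : ℕ → ℝ} (hγ₀ : γ₀ ∈ hilbertCube) :
    Tendsto (fun γ => (volume (Ugamma γ ∆ Ugamma γ₀)).toReal) (𝓝[hilbertCube] γ₀) (𝓝 0) := by
  set f : (ℕ → ℝ) → ℕ → ℝ := fun γ i => 2 * |γ i ^ 3 - γ₀ i ^ 3|
  have hsum : Summable fun i => 2 * arcCenter i ^ 3 := summable_arcCenter_pow_three.mul_left 2
  have hbound : ∀ γ ∈ hilbertCube, ∀ i, ‖f γ i‖ ≤ 2 * arcCenter i ^ 3 := fun γ hγ i => by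
    rw [Real.norm_of_nonneg (by positivity)]
    exact mul_le_mul_of_nonneg_left (abs_sub_le_of_nonneg_of_le (pow_nonneg (hγ i).1 3)
      (pow_three_le_of_mem_hilbertCube hγ i) (pow_nonneg (hγ₀ i).1 3)
      (pow_three_le_of_mem_hilbertCube hγ₀ i)) two_pos.le
  have hf : Tendsto (fun γ => ∑' i, f γ i) (𝓝[hilbertCube] γ₀) (𝓝 0) := by
    have hterm (i : ℕ) : Tendsto (f · i) (𝓝[hilbertCube] γ₀) (𝓝 0) := by
      have : Continuous (f · i) := by fun_prop
      simpa [f] using (this.tendsto γ₀).mono_left nhdsWithin_le_nhds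
    simpa using tendsto_tsum_of_dominated_convergence hsum hterm
      (eventually_nhdsWithin_of_forall hbound)
  refine squeeze_zero' (Eventually.of_forall fun _ => ENNReal.toReal_nonneg) ?_ hf
  filter_upwards [self_mem_nhdsWithin] with γ hγ
  have hvol := volume_Ugamma_symmDiff_le hγ hγ₀
  rw [← ENNReal.ofReal_tsum_of_nonneg (fun i => by positivity)
    (hsum.of_norm_bounded (hbound γ hγ))] at hvol
  exact ENNReal.toReal_le_of_le_ofReal (tsum_nonneg fun i => by positivity) hvol

/-- The map `γ ↦ U_γ` from the Hilbert cube (product topology) to regular open sets with the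
metric `d(U,V) = m(U ∆ V)` is continuous and injective. -/
theorem stmt_17 (H : Set (ℕ → ℝ))
    (hH : H = {γ | ∀ i : ℕ, 0 ≤ γ i ∧ γ i ≤ 1 / ((i : ℝ) + 2)}) :
    (∀ γ₀ ∈ H, ∀ ε > 0, ∃ V ∈ nhds γ₀, ∀ γ ∈ V ∩ H,
        (volume (symmDiff (Ugamma γ) (Ugamma γ₀))).toReal < ε) ∧
      Set.InjOn Ugamma H := by
  obtain rfl : H = hilbertCube := hH
  refine ⟨fun γ₀ hγ₀ ε hε => ?_, injOn_Ugamma⟩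
  exact mem_nhdsWithin_iff_exists_mem_nhds_inter.mp
    (tendsto_volume_Ugamma_symmDiff hγ₀ (Iio_mem_nhds hε))
end
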